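/- arXiv:2211.03300 — 3 statements merged into one kernel-verified Lean document; each statement's English description precedes it below -/
import Mathlib

section
/- (Exact second-moment identity behind Proposition 1, part 2.) The uniform average over all selections s : Fin L → Fin n of the squared error ‖G s - Cg‖² equals (1/L²) ∑ l, (1/n) ∑ i, ‖V l i - C l‖². -/
open scoped BigOperators
open Finset

lemma key_sum (L n : ℕ) (x : Fin L → Fin n → ℝ) (l m : Fin L) :
    ∑ s : Fin L → Fin n, x l (s l) * x m (s m) =
      ∏ i, ∑ j, (if i = l then x l j else 1) * (if i = m then x m j else 1) := by
  rw [Fintype.prod_sum]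
  apply Fintype.sum_congr
  intro s
  rw [Finset.prod_mul_distrib,
    Finset.prod_ite_eq' Finset.univ l (fun a => x l (s a)),
    Finset.prod_ite_eq' Finset.univ m (fun a => x m (s a))]
  simp

lemma key_ne (L n : ℕ) (x : Fin L → Fin n → ℝ) (l m : Fin L) (h : l ≠ m)
    (hx : ∑ i, x l i = 0) :
    ∑ s : Fin L → Fin n, x l (s l) * x m (s m) = 0 := by
  rw [key_sum]
  apply Finset.prod_eq_zero (Finset.mem_univ l)
  simp [h, hx]

lemma key_eq (L n : ℕ) (x : Fin L → Fin n → ℝ) (l : Fin L) :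
    ∑ s : Fin L → Fin n, x l (s l) * x l (s l) =
      (n : ℝ) ^ (L - 1) * ∑ i, x l i * x l i := by
  rw [key_sum]
  classical
  rw [← Finset.mul_prod_erase Finset.univ _ (Finset.mem_univ l)]
  have h1 : ∑ j, (if l = l then x l j else 1) * (if l = l then x l j else 1)
      = ∑ i, x l i * x l i := by simp
  have h2 : ∏ i ∈ Finset.univ.erase l,
      (∑ j, (if i = l then x l j else 1) * (if i = l then x l j else 1)) = (n : ℝ) ^ (L - 1) := by
    rw [Finset.prod_congr rfl (fun i hi => ?_), Finset.prod_const,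
      Finset.card_erase_of_mem (Finset.mem_univ l), Finset.card_univ, Fintype.card_fin]
    have : i ≠ l := (Finset.mem_erase.mp hi).1
    simp [this]
  rw [h1, h2]
  ring

lemma esum_apply {F : ℕ} {ι : Type*} (s : Finset ι) (f : ι → EuclideanSpace ℝ (Fin F))
    (k : Fin F) : (∑ i ∈ s, f i) k = ∑ i ∈ s, f i k := by
  rw [WithLp.ofLp_sum, Finset.sum_apply]

lemma key_sq (L n : ℕ) (x : Fin L → Fin n → ℝ) (hx : ∀ l, ∑ i, x l i = 0) :
    ∑ s : Fin L → Fin n, (∑ l, x l (s l)) ^ 2 =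
      (n : ℝ) ^ (L - 1) * ∑ l, ∑ i, (x l i) ^ 2 := by
  have h1 : ∀ s : Fin L → Fin n,
      (∑ l, x l (s l)) ^ 2 = ∑ l, ∑ m, x l (s l) * x m (s m) := by
    intro s; rw [sq, Finset.sum_mul_sum]
  simp_rw [h1]
  rw [Finset.sum_comm]
  have h2 : ∀ l : Fin L, ∑ s : Fin L → Fin n, ∑ m, x l (s l) * x m (s m)
      = (n : ℝ) ^ (L - 1) * ∑ i, (x l i) ^ 2 := by
    intro l
    rw [Finset.sum_comm]
    rw [Finset.sum_eq_single l]
    · rw [key_eq]; simp [sq]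
    · intro m _ hm
      exact key_ne L n x l m (Ne.symm hm) (hx l)
    · simp
  rw [Finset.sum_congr rfl fun l _ => h2 l, ← Finset.mul_sum]


/-- Exact second-moment identity behind Proposition 1, part 2: the uniform average over
all selections of the squared error between the group centroid and the global centroid
equals `(1/L²) ∑ l, (1/n) ∑ i, ‖V l i - C l‖²`. -/
theorem group_centroid_second_moment
    (F L n : ℕ) (hL : 1 ≤ L) (hn : 1 ≤ n)
    (V : Fin L → Fin n → EuclideanSpace ℝ (Fin F))
    (C : Fin L → EuclideanSpace ℝ (Fin F))
    (hC : ∀ l, C l = (1 / (n : ℝ)) • ∑ i, V l i)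
    (Cg : EuclideanSpace ℝ (Fin F))
    (hCg : Cg = (1 / (L : ℝ)) • ∑ l, C l)
    (G : (Fin L → Fin n) → EuclideanSpace ℝ (Fin F))
    (hG : ∀ s, G s = (1 / (L : ℝ)) • ∑ l, V l (s l)) :
    (1 / (n : ℝ) ^ L) * ∑ s : Fin L → Fin n, ‖G s - Cg‖ ^ 2 =
      (1 / (L : ℝ) ^ 2) * ∑ l, (1 / (n : ℝ)) * ∑ i, ‖V l i - C l‖ ^ 2 := by
  have hn0 : (n : ℝ) ≠ 0 := by positivity
  have hL0 : (L : ℝ) ≠ 0 := by positivity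
  set x : Fin F → Fin L → Fin n → ℝ := fun k l i => V l i k - C l k with hxdef
  have hnorm : ∀ (v : EuclideanSpace ℝ (Fin F)), ‖v‖ ^ 2 = ∑ k, (v k) ^ 2 := by
    intro v
    rw [EuclideanSpace.norm_eq, Real.sq_sqrt (by positivity)]
    exact Finset.sum_congr rfl fun k _ => by rw [Real.norm_eq_abs, sq_abs]
  have hx0 : ∀ k l, ∑ i, x k l i = 0 := by
    intro k l
    simp only [hxdef, Finset.sum_sub_distrib, Finset.sum_const, Finset.card_univ,
      Fintype.card_fin, nsmul_eq_mul, hC l]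
    simp only [PiLp.smul_apply, smul_eq_mul, esum_apply]
    field_simp
    ring
  have hcoord : ∀ (s : Fin L → Fin n) (k : Fin F),
      (G s - Cg) k = (1 / (L : ℝ)) * ∑ l, x k l (s l) := by
    intro s k
    simp only [PiLp.sub_apply, hG s, hCg, PiLp.smul_apply, smul_eq_mul, esum_apply,
      hxdef, Finset.sum_sub_distrib]
    ring
  -- rewrite LHS
  have hmain : ∑ s : Fin L → Fin n, ‖G s - Cg‖ ^ 2
      = (1 / (L : ℝ) ^ 2) * ((n : ℝ) ^ (L - 1) * ∑ k, ∑ l, ∑ i, (x k l i) ^ 2) := by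
    calc ∑ s : Fin L → Fin n, ‖G s - Cg‖ ^ 2
        = ∑ s : Fin L → Fin n, ∑ k, ((1 / (L : ℝ)) * ∑ l, x k l (s l)) ^ 2 := by
          refine Finset.sum_congr rfl fun s _ => ?_
          rw [hnorm]
          exact Finset.sum_congr rfl fun k _ => by rw [hcoord]
      _ = ∑ k, (1 / (L : ℝ) ^ 2) * ∑ s : Fin L → Fin n, (∑ l, x k l (s l)) ^ 2 := by
          rw [Finset.sum_comm]
          refine Finset.sum_congr rfl fun k _ => ?_
          rw [Finset.mul_sum]
          refine Finset.sum_congr rfl fun s _ => ?_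
          ring
      _ = ∑ k, (1 / (L : ℝ) ^ 2) * ((n : ℝ) ^ (L - 1) * ∑ l, ∑ i, (x k l i) ^ 2) := by
          refine Finset.sum_congr rfl fun k _ => ?_
          rw [key_sq L n (x k) (hx0 k)]
      _ = (1 / (L : ℝ) ^ 2) * ((n : ℝ) ^ (L - 1) * ∑ k, ∑ l, ∑ i, (x k l i) ^ 2) := by
          rw [← Finset.mul_sum, ← Finset.mul_sum]
  rw [hmain]
  have hRHS : ∑ l, (1 / (n : ℝ)) * ∑ i, ‖V l i - C l‖ ^ 2
      = (1 / (n : ℝ)) * ∑ k, ∑ l, ∑ i, (x k l i) ^ 2 := by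
    rw [Finset.mul_sum]
    have : ∀ l i, ‖V l i - C l‖ ^ 2 = ∑ k, (x k l i) ^ 2 := by
      intro l i
      rw [hnorm]
      exact Finset.sum_congr rfl fun k _ => by simp [hxdef]
    simp_rw [this]
    have h3 : ∀ l : Fin L, ∑ i, ∑ k, (x k l i) ^ 2 = ∑ k, ∑ i, (x k l i) ^ 2 :=
      fun l => Finset.sum_comm
    simp_rw [h3]
    rw [← Finset.mul_sum, Finset.sum_comm, Finset.mul_sum]
  rw [hRHS]
  have hpow : (n : ℝ) ^ L = (n : ℝ) ^ (L - 1) * n := by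
    rw [← pow_succ, Nat.sub_add_cancel hL]
  rw [hpow]
  have h0 : (n : ℝ) ^ (L - 1) ≠ 0 := by positivity
  field_simp
end

section
/- (Proposition 1, part 2.) Suppose each point deviates from its cluster centroid by at most σ l, i.e. for all l and i, ‖V l i - C l‖² ≤ (σ l)². Then the expected squared error between the group centroid and the global centroid under uniform random selection is bounded by (1/L²) ∑ l, (σ l)²: (1/n^L) ∑_{s : Fin L → Fin n} ‖G s - Cg‖² ≤ (1/L²) ∑ l, (σ l)². -/
/-! Put `X l i = V l i - C l`. Then `G s - Cg = (1/L) • ∑ l, X l (s l)` and every cluster's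
deviations sum to zero. Expanding `‖∑ l, X l (s l)‖²` into inner products, each cross term
`⟪X l (s l), X m (s m)⟫` with `l ≠ m` sums to zero over all selections, since `s l` and `s m`
range independently over `Fin n`. Hence the sum over selections equals
`n ^ (L - 1) * ∑ l, ∑ i, ‖X l i‖²`: the variance of a sum of independent centred variables is
the sum of their variances, each of which is at most `σ l ^ 2`. -/

open scoped RealInnerProductSpace

open Finset

namespace Fintype

variable {ι α M : Type*} [Fintype ι] [DecidableEq ι] [Fintype α] [AddCommMonoid M]

lemma sum_pi_eval (f : α → M) (i : ι) :
    ∑ s : ι → α, f (s i) = card α ^ (card ι - 1) • ∑ a, f a := by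
  simpa using sum_piFinset_apply f univ i

lemma sum_pi_eval_eval (f : α → α → M) {i j : ι} (hij : j ≠ i) :
    ∑ s : ι → α, f (s i) (s j) = card α ^ (card ι - 2) • ∑ a, ∑ b, f a b := by
  rw [sum_equiv (Equiv.piSplitAt i fun _ ↦ α) (fun s ↦ f (s i) (s j))
    (fun p ↦ f p.1 (p.2 ⟨j, hij⟩)) fun _ ↦ rfl, sum_prod_type, smul_sum]
  refine Finset.sum_congr rfl fun a _ ↦ (sum_pi_eval (f a) (⟨j, hij⟩ : {k // k ≠ i})).trans ?_
  rw [card_subtype_compl, card_subtype_eq, Nat.sub_sub]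

end Fintype

section InnerProductSpace

variable {ι α E : Type*} [Fintype ι] [DecidableEq ι] [Fintype α]
  [NormedAddCommGroup E] [InnerProductSpace ℝ E]

lemma sum_inner_pi_eval_eq_zero (X : ι → α → E) (hX : ∀ i, ∑ a, X i a = 0) {i j : ι}
    (hij : j ≠ i) : ∑ s : ι → α, ⟪X i (s i), X j (s j)⟫ = 0 := by
  rw [Fintype.sum_pi_eval_eval (fun a b ↦ ⟪X i a, X j b⟫) hij]
  simp only [← inner_sum, hX j, inner_zero_right, sum_const_zero, smul_zero]

theorem sum_norm_sq_sum_pi_eval (X : ι → α → E) (hX : ∀ i, ∑ a, X i a = 0) :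
    ∑ s : ι → α, ‖∑ i, X i (s i)‖ ^ 2 =
      Fintype.card α ^ (Fintype.card ι - 1) * ∑ i, ∑ a, ‖X i a‖ ^ 2 := by
  calc ∑ s : ι → α, ‖∑ i, X i (s i)‖ ^ 2
      = ∑ i, ∑ j, ∑ s : ι → α, ⟪X i (s i), X j (s j)⟫ := by
        simp_rw [← real_inner_self_eq_norm_sq, sum_inner, inner_sum]
        rw [sum_comm]
        exact sum_congr rfl fun _ _ ↦ sum_comm
    _ = ∑ i, ∑ s : ι → α, ‖X i (s i)‖ ^ 2 := by
        refine sum_congr rfl fun i _ ↦ ?_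
        rw [sum_eq_single i (fun j _ hij ↦ sum_inner_pi_eval_eq_zero X hX hij) (by simp)]
        simp_rw [real_inner_self_eq_norm_sq]
    _ = _ := by
        rw [mul_sum]
        refine sum_congr rfl fun i _ ↦ ?_
        rw [Fintype.sum_pi_eval (fun a ↦ ‖X i a‖ ^ 2), nsmul_eq_mul, Nat.cast_pow]

end InnerProductSpace

lemma sum_sub_average_eq_zero {α E : Type*} [Fintype α] [AddCommGroup E] [Module ℝ E]
    (v : α → E) : ∑ a, (v a - (1 / (Fintype.card α : ℝ)) • ∑ b, v b) = 0 := by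
  rcases isEmpty_or_nonempty α with _ | _
  · simp
  · rw [sum_sub_distrib, sum_const, card_univ, ← Nat.cast_smul_eq_nsmul ℝ, smul_smul,
      mul_one_div_cancel (by positivity), one_smul, sub_self]

theorem group_centroid_error_bound_general
    (F L n : ℕ) (hL : 1 ≤ L) (hn : 1 ≤ n)
    (V : Fin L → Fin n → EuclideanSpace ℝ (Fin F))
    (C : Fin L → EuclideanSpace ℝ (Fin F))
    (hC : ∀ l, C l = (1 / (n : ℝ)) • ∑ i, V l i)
    (Cg : EuclideanSpace ℝ (Fin F))
    (hCg : Cg = (1 / (L : ℝ)) • ∑ l, C l)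
    (G : (Fin L → Fin n) → EuclideanSpace ℝ (Fin F))
    (hG : ∀ s, G s = (1 / (L : ℝ)) • ∑ l, V l (s l))
    (σ : Fin L → ℝ)
    (hdev : ∀ l i, ‖V l i - C l‖ ^ 2 ≤ (σ l) ^ 2) :
    (1 / (n : ℝ) ^ L) * ∑ s : Fin L → Fin n, ‖G s - Cg‖ ^ 2 ≤
      (1 / (L : ℝ) ^ 2) * ∑ l, (σ l) ^ 2 := by
  set X : Fin L → Fin n → EuclideanSpace ℝ (Fin F) := fun l i ↦ V l i - C l
  have hX : ∀ l, ∑ i, X l i = 0 := fun l ↦ by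
    simpa [X, hC l] using sum_sub_average_eq_zero (V l)
  have hGX : ∀ s, G s - Cg = (1 / (L : ℝ)) • ∑ l, X l (s l) := fun s ↦ by
    rw [hG, hCg, ← smul_sub, ← sum_sub_distrib]
  have hXσ : ∀ l, ∑ i, ‖X l i‖ ^ 2 ≤ n * σ l ^ 2 := fun l ↦
    (sum_le_sum fun i _ ↦ hdev l i).trans_eq (by simp)
  calc (1 / (n : ℝ) ^ L) * ∑ s : Fin L → Fin n, ‖G s - Cg‖ ^ 2
      = (1 / (L : ℝ) ^ 2) * (n ^ (L - 1) * ∑ l, ∑ i, ‖X l i‖ ^ 2) / n ^ L := by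
        simp_rw [hGX, norm_smul, mul_pow, ← mul_sum, sum_norm_sq_sum_pi_eval X hX]
        simp only [one_div, norm_inv, RCLike.norm_natCast, inv_pow, Fintype.card_fin]
        ring
    _ ≤ (1 / (L : ℝ) ^ 2) * (n ^ (L - 1) * ∑ l, n * σ l ^ 2) / n ^ L := by
        gcongr with l
        exact hXσ l
    _ = (1 / (L : ℝ) ^ 2) * ∑ l, σ l ^ 2 := by
        have hn0 : (n : ℝ) ≠ 0 := Nat.cast_ne_zero.mpr (by omega)
        have hnL : (n : ℝ) ^ (L - 1) * n = n ^ L := pow_sub_one_mul (by omega) _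
        rw [← mul_sum, ← hnL]
        field_simp

/-- Proposition 1, part 2: if every point deviates from its cluster centroid by at most
`σ l`, then the expected squared error between the group centroid and the global centroid
under uniform random selection is bounded by `(1/L²) ∑ l, (σ l)²`. -/
theorem group_centroid_error_bound
    (F L n : ℕ) (hL : 1 ≤ L) (hn : 1 ≤ n)
    (V : Fin L → Fin n → EuclideanSpace ℝ (Fin F))
    (C : Fin L → EuclideanSpace ℝ (Fin F))
    (hC : ∀ l, C l = (1 / (n : ℝ)) • ∑ i, V l i)
    (Cg : EuclideanSpace ℝ (Fin F))
    (hCg : Cg = (1 / (L : ℝ)) • ∑ l, C l)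
    (G : (Fin L → Fin n) → EuclideanSpace ℝ (Fin F))
    (hG : ∀ s, G s = (1 / (L : ℝ)) • ∑ l, V l (s l))
    (σ : Fin L → ℝ) (hσ : ∀ l, 0 ≤ σ l)
    (hdev : ∀ l i, ‖V l i - C l‖ ^ 2 ≤ (σ l) ^ 2) :
    (1 / (n : ℝ) ^ L) * ∑ s : Fin L → Fin n, ‖G s - Cg‖ ^ 2 ≤
      (1 / (L : ℝ) ^ 2) * ∑ l, (σ l) ^ 2 :=
  group_centroid_error_bound_general F L n hL hn V C hC Cg hCg G hG σ hdev
end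

section
/- (Sampling without replacement, as in Algorithm ICG.) Let π : Fin L → Equiv.Perm (Fin n) range over independent uniformly random permutations of each cluster, and for a group index j : Fin n define the j-th group centroid G' π j = (1/L) • ∑ l, V l ((π l) j). Then for every fixed j, the average over all permutation tuples π of G' π j equals Cg, and the average over all permutation tuples π of ‖G' π j - Cg‖² equals (1/L²) ∑ l, (1/n) ∑ i, ‖V l i - C l‖². -/
open scoped BigOperators RealInnerProductSpace

lemma card_fiber_perm {n : ℕ} (hn : 1 ≤ n) (j i : Fin n) :
    (Finset.univ.filter (fun σ : Equiv.Perm (Fin n) => σ j = i)).card = (n - 1).factorial := by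
  have hcard : ∀ i i' : Fin n,
      (Finset.univ.filter (fun σ : Equiv.Perm (Fin n) => σ j = i)).card =
      (Finset.univ.filter (fun σ : Equiv.Perm (Fin n) => σ j = i')).card := by
    intro i i'
    apply Finset.card_bij' (fun σ _ => Equiv.swap i i' * σ) (fun σ _ => Equiv.swap i i' * σ)
    · intro σ hσ
      simp only [Finset.mem_filter, Finset.mem_univ, true_and] at hσ ⊢
      simp [Equiv.Perm.mul_apply, hσ]
    · intro σ hσ
      simp only [Finset.mem_filter, Finset.mem_univ, true_and] at hσ ⊢
      simp [Equiv.Perm.mul_apply, hσ, Equiv.swap_apply_right]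
    · intro σ _
      simp [← mul_assoc, Equiv.swap_mul_self]
    · intro σ _
      simp [← mul_assoc, Equiv.swap_mul_self]
  have hpart : ∑ i : Fin n,
      (Finset.univ.filter (fun σ : Equiv.Perm (Fin n) => σ j = i)).card = n.factorial := by
    rw [← Finset.card_eq_sum_card_fiberwise (fun σ _ => Finset.mem_univ (σ j))]
    simp [Fintype.card_perm]
  have h2 : n * (Finset.univ.filter (fun σ : Equiv.Perm (Fin n) => σ j = i)).card
      = n.factorial := by
    rw [← hpart, Finset.sum_congr rfl (fun i' _ => hcard i' i)]
    simp [mul_comm]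
  have h3 : n * (n - 1).factorial = n.factorial := by
    obtain ⟨k, rfl⟩ : ∃ k, n = k + 1 := ⟨n - 1, by omega⟩
    simp [Nat.factorial_succ]
  have := h2.trans h3.symm
  exact Nat.eq_of_mul_eq_mul_left (by omega) this.symm |>.symm

lemma sum_perm_eval {n : ℕ} (hn : 1 ≤ n) {M : Type*} [AddCommMonoid M]
    (j : Fin n) (f : Fin n → M) :
    ∑ σ : Equiv.Perm (Fin n), f (σ j) = (n - 1).factorial • ∑ i, f i := by
  rw [Finset.sum_comp f (fun σ : Equiv.Perm (Fin n) => σ j)]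
  have himg : (Finset.univ : Finset (Equiv.Perm (Fin n))).image
      (fun σ : Equiv.Perm (Fin n) => σ j) = Finset.univ := by
    apply Finset.eq_univ_of_forall
    intro i
    exact Finset.mem_image.mpr ⟨Equiv.swap j i, Finset.mem_univ _, Equiv.swap_apply_left j i⟩
  rw [himg, Finset.smul_sum]
  exact Finset.sum_congr rfl fun i _ => by rw [card_fiber_perm hn]

lemma sum_pi_eval {ι : Type*} [Fintype ι] [DecidableEq ι] {G : Type*} [Fintype G]
    [DecidableEq G] {M : Type*} [AddCommMonoid M] (l : ι) (g : G → M) :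
    ∑ π : ι → G, g (π l) =
      (Fintype.card G ^ (Fintype.card ι - 1)) • ∑ σ, g σ := by
  rw [← (Equiv.funSplitAt l G).symm.sum_comp (fun π => g (π l))]
  have : ∀ p : G × ({ j // j ≠ l } → G), ((Equiv.funSplitAt l G).symm p) l = p.1 := by
    intro p; simp [Equiv.funSplitAt, Equiv.piSplitAt]
  simp_rw [this]
  rw [Fintype.sum_prod_type_right]
  dsimp only
  rw [Finset.sum_const, Finset.card_univ]
  congr 1
  rw [Fintype.card_fun, Fintype.card_subtype_compl, Fintype.card_subtype_eq]

lemma sum_pi_cross {ι : Type*} [Fintype ι] [DecidableEq ι] {G : Type*} [Fintype G]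
    {E : Type*} [NormedAddCommGroup E] [InnerProductSpace ℝ E]
    {l m : ι} (hml : m ≠ l) (g h : G → E) (hg : ∑ σ, g σ = 0) :
    ∑ π : ι → G, ⟪g (π l), h (π m)⟫ = 0 := by
  rw [← (Equiv.funSplitAt l G).symm.sum_comp (fun π => ⟪g (π l), h (π m)⟫)]
  have h1 : ∀ p : G × ({ j // j ≠ l } → G), ((Equiv.funSplitAt l G).symm p) l = p.1 := by
    intro p; simp [Equiv.funSplitAt, Equiv.piSplitAt]
  have h2 : ∀ p : G × ({ j // j ≠ l } → G), ((Equiv.funSplitAt l G).symm p) m =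
      p.2 ⟨m, hml⟩ := by
    intro p; simp [Equiv.funSplitAt, Equiv.piSplitAt, hml]
  simp_rw [h1, h2]
  rw [Fintype.sum_prod_type_right]
  apply Finset.sum_eq_zero
  intro r _
  dsimp only
  rw [← sum_inner, hg, inner_zero_left]

set_option maxHeartbeats 2000000

/-- Sampling without replacement, as in Algorithm ICG: for independent uniformly random
permutations of each cluster, the `j`-th group centroid `G' π j = (1/L) • ∑ l, V l (π l j)`
has average (over all permutation tuples) equal to the global centroid `Cg`, and its
average squared error from `Cg` equals `(1/L²) ∑ l, (1/n) ∑ i, ‖V l i - C l‖²`. -/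
theorem icg_sampling_without_replacement
    (F L n : ℕ) (hL : 1 ≤ L) (hn : 1 ≤ n)
    (V : Fin L → Fin n → EuclideanSpace ℝ (Fin F))
    (C : Fin L → EuclideanSpace ℝ (Fin F))
    (hC : ∀ l, C l = (1 / (n : ℝ)) • ∑ i, V l i)
    (Cg : EuclideanSpace ℝ (Fin F))
    (hCg : Cg = (1 / (L : ℝ)) • ∑ l, C l)
    (G' : (Fin L → Equiv.Perm (Fin n)) → Fin n → EuclideanSpace ℝ (Fin F))
    (hG' : ∀ π j, G' π j = (1 / (L : ℝ)) • ∑ l, V l ((π l) j)) :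
    ∀ j : Fin n,
      ((1 / ((n.factorial : ℝ)) ^ L) •
          ∑ π : Fin L → Equiv.Perm (Fin n), G' π j = Cg) ∧
      ((1 / ((n.factorial : ℝ)) ^ L) *
          ∑ π : Fin L → Equiv.Perm (Fin n), ‖G' π j - Cg‖ ^ 2 =
        (1 / (L : ℝ) ^ 2) * ∑ l, (1 / (n : ℝ)) * ∑ i, ‖V l i - C l‖ ^ 2) := by
  intro j
  have hn0 : (n : ℝ) ≠ 0 := Nat.cast_ne_zero.mpr (by omega)
  have hL0 : (L : ℝ) ≠ 0 := Nat.cast_ne_zero.mpr (by omega)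
  have hN0 : ((n.factorial : ℝ)) ≠ 0 := Nat.cast_ne_zero.mpr n.factorial_ne_zero
  have hNL0 : ((n.factorial : ℝ)) ^ L ≠ 0 := pow_ne_zero _ hN0
  have hfacn : (n : ℝ) * ((n - 1).factorial : ℝ) = (n.factorial : ℝ) := by
    have : n * (n - 1).factorial = n.factorial := by
      obtain ⟨k, rfl⟩ : ∃ k, n = k + 1 := ⟨n - 1, by omega⟩
      simp [Nat.factorial_succ]
    exact_mod_cast congrArg (Nat.cast : ℕ → ℝ) this
  have hpowL : ((n.factorial : ℝ)) ^ (L - 1) * (n.factorial : ℝ) = (n.factorial : ℝ) ^ L := by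
    rw [← pow_succ]
    congr 1
    omega
  have hcoeff : (((n.factorial ^ (L - 1) * (n - 1).factorial : ℕ)) : ℝ)
      = (n.factorial : ℝ) ^ L / n := by
    push_cast
    rw [eq_div_iff hn0]
    rw [mul_assoc, mul_comm ((n - 1).factorial : ℝ) (n : ℝ), hfacn, hpowL]
  -- key average of one coordinate
  have hA : ∀ l, (∑ π : Fin L → Equiv.Perm (Fin n), V l ((π l) j))
      = ((n.factorial : ℝ) ^ L / n) • ∑ i, V l i := by
    intro l
    have e1 := sum_pi_eval (ι := Fin L) l (fun σ : Equiv.Perm (Fin n) => V l (σ j))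
    rw [sum_perm_eval hn j (fun i => V l i)] at e1
    rw [Fintype.card_perm, Fintype.card_fin, Fintype.card_fin] at e1
    rw [e1, ← mul_smul, ← Nat.cast_smul_eq_nsmul ℝ, hcoeff]
  have key1 : (1 / ((n.factorial : ℝ)) ^ L) •
      ∑ π : Fin L → Equiv.Perm (Fin n), G' π j = Cg := by
    have hsum : ∑ π : Fin L → Equiv.Perm (Fin n), G' π j
        = ∑ l, ((1 / (L : ℝ)) * ((n.factorial : ℝ) ^ L / n)) • ∑ i, V l i := by
      simp_rw [hG']
      rw [← Finset.smul_sum, Finset.sum_comm, Finset.smul_sum]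
      refine Finset.sum_congr rfl fun l _ => ?_
      rw [hA l, smul_smul]
    rw [hsum, hCg]
    simp_rw [hC]
    rw [Finset.smul_sum, Finset.smul_sum]
    refine Finset.sum_congr rfl fun l _ => ?_
    rw [smul_smul, smul_smul]
    congr 1
    field_simp
  refine ⟨key1, ?_⟩
  -- second moment
  have hX0 : ∀ l, ∑ σ : Equiv.Perm (Fin n), (V l (σ j) - C l) = 0 := by
    intro l
    rw [Finset.sum_sub_distrib, sum_perm_eval hn j (fun i => V l i)]
    rw [Finset.sum_const, Finset.card_univ, Fintype.card_perm, Fintype.card_fin]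
    have hfacR : ((n - 1).factorial : ℝ) = (n.factorial : ℝ) * (1 / n) := by
      rw [mul_one_div, eq_div_iff hn0, mul_comm, hfacn]
    rw [hC l, ← Nat.cast_smul_eq_nsmul ℝ, ← Nat.cast_smul_eq_nsmul ℝ, smul_smul, ← hfacR,
      sub_self]
  have hdiag : ∀ l, ∑ π : Fin L → Equiv.Perm (Fin n),
      (inner ℝ (V l ((π l) j) - C l) (V l ((π l) j) - C l) : ℝ)
      = ((n.factorial : ℝ) ^ L / n) * ∑ i, ‖V l i - C l‖ ^ 2 := by
    intro l
    simp_rw [real_inner_self_eq_norm_sq]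
    have e1 := sum_pi_eval (ι := Fin L) l (fun σ : Equiv.Perm (Fin n) => ‖V l (σ j) - C l‖ ^ 2)
    rw [sum_perm_eval hn j (fun i => ‖V l i - C l‖ ^ 2)] at e1
    rw [Fintype.card_perm, Fintype.card_fin, Fintype.card_fin] at e1
    rw [e1, ← mul_smul, ← Nat.cast_smul_eq_nsmul ℝ, hcoeff, smul_eq_mul]
  have hnorm : ∀ π : Fin L → Equiv.Perm (Fin n), ‖G' π j - Cg‖ ^ 2
      = (1 / (L : ℝ)) ^ 2 *
        ∑ l, ∑ m, (inner ℝ (V l ((π l) j) - C l) (V m ((π m) j) - C m) : ℝ) := by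
    intro π
    have hdiff : G' π j - Cg = (1 / (L : ℝ)) • ∑ l, (V l ((π l) j) - C l) := by
      rw [hG', hCg, ← smul_sub, Finset.sum_sub_distrib]
    rw [hdiff, norm_smul, mul_pow]
    congr 1
    · rw [Real.norm_eq_abs, sq_abs]
    · rw [← real_inner_self_eq_norm_sq, sum_inner]
      exact Finset.sum_congr rfl fun l _ => inner_sum _ _ _
  have hswap : ∑ π : Fin L → Equiv.Perm (Fin n), ∑ l, ∑ m,
        (inner ℝ (V l ((π l) j) - C l) (V m ((π m) j) - C m) : ℝ)
      = ∑ l, ∑ m, ∑ π : Fin L → Equiv.Perm (Fin n),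
        (inner ℝ (V l ((π l) j) - C l) (V m ((π m) j) - C m) : ℝ) := by
    rw [Finset.sum_comm]
    exact Finset.sum_congr rfl fun l _ => Finset.sum_comm
  have hinner : ∀ l, (∑ m, ∑ π : Fin L → Equiv.Perm (Fin n),
        (inner ℝ (V l ((π l) j) - C l) (V m ((π m) j) - C m) : ℝ))
      = ((n.factorial : ℝ) ^ L / n) * ∑ i, ‖V l i - C l‖ ^ 2 := by
    intro l
    rw [Finset.sum_eq_single l]
    · exact hdiag l
    · intro m _ hm
      exact sum_pi_cross hm (fun σ : Equiv.Perm (Fin n) => V l (σ j) - C l) (fun σ : Equiv.Perm (Fin n) => V m (σ j) - C m) (hX0 l)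
    · intro h; exact absurd (Finset.mem_univ l) h
  have hsum2 : ∑ π : Fin L → Equiv.Perm (Fin n), ‖G' π j - Cg‖ ^ 2
      = (1 / (L : ℝ)) ^ 2 * ∑ l, ((n.factorial : ℝ) ^ L / n) * ∑ i, ‖V l i - C l‖ ^ 2 := by
    simp_rw [hnorm]
    rw [← Finset.mul_sum, hswap]
    congr 1
    exact Finset.sum_congr rfl fun l _ => hinner l
  rw [hsum2]
  rw [Finset.mul_sum, Finset.mul_sum, Finset.mul_sum]
  refine Finset.sum_congr rfl fun l _ => ?_
  field_simp
end
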